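/- On R^4 with coordinates (u, v, p_u, p_v), canonical Poisson bracket, and Hamiltonian Q_0 = -p_u p_v + u^n v^m on the domain u, v > 0 with n, m ≠ 0 and n + m = -2 (so the potential is homogeneous of degree -2), assume m ≠ n and (1+m)(1+n) ≠ 0. Then the three functions Q_0, C₁ = (m-n)(u p_u + v p_v) and V₁₁ = 8(1+m)(1+n)uv close under the Poisson bracket, with {C₁, Q_0} = 2(m-n) Q_0, {C₁, V₁₁} = -2(m-n) V₁₁ and {V₁₁, Q_0} = -8(1+m)(1+n)(u p_u + v p_v) = -(8(1+m)(1+n)/(m-n)) C₁, so they form an sl(2,R) algebra. -/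
import Mathlib


/-- Partial derivative of a phase-space function on ℝ⁴ in the `i`-th coordinate. -/
noncomputable def pd (i : Fin 4) (F : (Fin 4 → ℝ) → ℝ) (x : Fin 4 → ℝ) : ℝ :=
  fderiv ℝ F x (Pi.single i 1)

/-- Canonical Poisson bracket on ℝ⁴ with coordinates (u, v, p_u, p_v) = (x 0, x 1, x 2, x 3). -/
noncomputable def pb (F G : (Fin 4 → ℝ) → ℝ) (x : Fin 4 → ℝ) : ℝ :=
  pd 0 F x * pd 2 G x + pd 1 F x * pd 3 G x - pd 2 F x * pd 0 G x - pd 3 F x * pd 1 G x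

/-- The Hamiltonian Q₀ = -p_u p_v + u^n v^m (real exponents, via rpow). -/
noncomputable def Q0W (n m : ℝ) : (Fin 4 → ℝ) → ℝ := fun x =>
  -(x 2 * x 3) + Real.rpow (x 0) n * Real.rpow (x 1) m

/-- The dilatation-weighted charge C₁ = (m - n)(u p_u + v p_v) (using 2 + n + m = 0). -/
noncomputable def C1W (n m : ℝ) : (Fin 4 → ℝ) → ℝ := fun x =>
  (m - n) * (x 0 * x 2 + x 1 * x 3)

/-- V₁₁ = 4(1+m)(1+n)·2uv. -/
noncomputable def V11W (n m : ℝ) : (Fin 4 → ℝ) → ℝ := fun x =>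
  4 * (1 + m) * (1 + n) * (2 * x 0 * x 1)

open Real in
noncomputable def prj (i : Fin 4) : (Fin 4 → ℝ) →L[ℝ] ℝ := ContinuousLinearMap.proj i

lemma hasF_prj (i : Fin 4) (x : Fin 4 → ℝ) :
    HasFDerivAt (fun y : Fin 4 → ℝ => y i) (prj i) x :=
  (prj i).hasFDerivAt

lemma pd_eq (i : Fin 4) {F : (Fin 4 → ℝ) → ℝ} {L : (Fin 4 → ℝ) →L[ℝ] ℝ} {x}
    (h : HasFDerivAt F L x) : pd i F x = L (Pi.single i 1) := by
  rw [pd, h.fderiv]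

lemma hasF_Q0 (n m : ℝ) (x : Fin 4 → ℝ) (h0 : 0 < x 0) (h1 : 0 < x 1) :
    HasFDerivAt (Q0W n m)
      ((-(x 2 • prj 3 + x 3 • prj 2)) +
        ((x 0 ^ n • ((m * x 1 ^ (m - 1)) • prj 1)) +
         (x 1 ^ m • ((n * x 0 ^ (n - 1)) • prj 0)))) x := by
  have ha : HasFDerivAt (fun y : Fin 4 → ℝ => y 2 * y 3)
      (x 2 • prj 3 + x 3 • prj 2) x := (hasF_prj 2 x).mul (hasF_prj 3 x)
  have hb : HasFDerivAt (fun y : Fin 4 → ℝ => y 0 ^ n)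
      ((n * x 0 ^ (n - 1)) • prj 0) x :=
    (hasF_prj 0 x).rpow_const (Or.inl h0.ne')
  have hc : HasFDerivAt (fun y : Fin 4 → ℝ => y 1 ^ m)
      ((m * x 1 ^ (m - 1)) • prj 1) x :=
    (hasF_prj 1 x).rpow_const (Or.inl h1.ne')
  exact ha.neg.add (hb.mul hc)

lemma hasF_C1 (n m : ℝ) (x : Fin 4 → ℝ) :
    HasFDerivAt (C1W n m)
      ((m - n) • ((x 0 • prj 2 + x 2 • prj 0) + (x 1 • prj 3 + x 3 • prj 1))) x := by
  have h : HasFDerivAt (fun y : Fin 4 → ℝ => y 0 * y 2 + y 1 * y 3)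
      ((x 0 • prj 2 + x 2 • prj 0) + (x 1 • prj 3 + x 3 • prj 1)) x :=
    ((hasF_prj 0 x).mul (hasF_prj 2 x)).add ((hasF_prj 1 x).mul (hasF_prj 3 x))
  exact h.const_mul (m - n)

lemma hasF_V11 (n m : ℝ) (x : Fin 4 → ℝ) :
    HasFDerivAt (V11W n m)
      ((4 * (1 + m) * (1 + n)) •
        ((2 * x 0) • prj 1 + x 1 • ((2 : ℝ) • prj 0))) x := by
  have h : HasFDerivAt (fun y : Fin 4 → ℝ => 2 * y 0 * y 1)
      ((2 * x 0) • prj 1 + x 1 • ((2 : ℝ) • prj 0)) x :=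
    ((hasF_prj 0 x).const_mul 2).mul (hasF_prj 1 x)
  exact h.const_mul (4 * (1 + m) * (1 + n))

/-- for the conformal monomial potential u^n v^m with n + m = -2
(n, m ≠ 0, m ≠ n, (1+m)(1+n) ≠ 0), on the domain u, v > 0, the functions
(C₁, V₁₁, Q₀) close into an sl(2,ℝ) algebra:
{C₁, Q₀} = 2(m-n) Q₀, {C₁, V₁₁} = -2(m-n) V₁₁,
{V₁₁, Q₀} = -(8(1+m)(1+n)/(m-n)) C₁. -/
theorem conformal_potential_sl2R (n m : ℝ) (hn : n ≠ 0) (hm : m ≠ 0)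
    (hsum : n + m = -2) (hne : m ≠ n) (hmn : (1 + m) * (1 + n) ≠ 0) :
    ∀ x : Fin 4 → ℝ, 0 < x 0 → 0 < x 1 →
      pb (C1W n m) (Q0W n m) x = 2 * (m - n) * Q0W n m x ∧
      pb (C1W n m) (V11W n m) x = -(2 * (m - n)) * V11W n m x ∧
      pb (V11W n m) (Q0W n m) x = -(8 * (1 + m) * (1 + n) / (m - n)) * C1W n m x := by
  intro x h0 h1
  have hQ := hasF_Q0 n m x h0 h1
  have hC := hasF_C1 n m x
  have hV := hasF_V11 n m x
  have e0 : x 0 * x 0 ^ (n - 1) = x 0 ^ n := by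
    conv_rhs => rw [show n = 1 + (n - 1) by ring, Real.rpow_add h0, Real.rpow_one]
  have e1 : x 1 * x 1 ^ (m - 1) = x 1 ^ m := by
    conv_rhs => rw [show m = 1 + (m - 1) by ring, Real.rpow_add h1, Real.rpow_one]
  have hd : m - n ≠ 0 := sub_ne_zero.mpr hne
  have pC : ∀ i, pd i (C1W n m) x = (m - n) * ![x 2, x 3, x 0, x 1] i := by
    intro i
    rw [pd_eq i hC]
    fin_cases i <;> simp [prj, Pi.single_apply]
  have pQ0 : pd 0 (Q0W n m) x = x 1 ^ m * (n * x 0 ^ (n - 1)) := by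
    rw [pd_eq 0 hQ]; simp [prj, Pi.single_apply]
  have pQ1 : pd 1 (Q0W n m) x = x 0 ^ n * (m * x 1 ^ (m - 1)) := by
    rw [pd_eq 1 hQ]; simp [prj, Pi.single_apply]
  have pQ2 : pd 2 (Q0W n m) x = -(x 3) := by
    rw [pd_eq 2 hQ]; simp [prj, Pi.single_apply]
  have pQ3 : pd 3 (Q0W n m) x = -(x 2) := by
    rw [pd_eq 3 hQ]; simp [prj, Pi.single_apply]
  have pV : ∀ i, pd i (V11W n m) x
      = 4 * (1 + m) * (1 + n) * ![2 * x 1, 2 * x 0, 0, 0] i := by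
    intro i
    rw [pd_eq i hV]
    fin_cases i <;> simp [prj, Pi.single_apply] <;> exact Or.inl (mul_comm _ _)
  refine ⟨?_, ?_, ?_⟩
  · rw [pb, pC 0, pC 1, pC 2, pC 3, pQ0, pQ1, pQ2, pQ3]
    simp only [Matrix.cons_val_zero, Matrix.cons_val_one, Matrix.head_cons,
      Matrix.cons_val_two, Matrix.tail_cons, Matrix.cons_val_three, Q0W]
    linear_combination (-(m - n) * n * (x 1 ^ m)) * e0 + (-(m - n) * m * (x 0 ^ n)) * e1 +
      ((n - m) * (x 0 ^ n * x 1 ^ m)) * hsum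
  · rw [pb, pC 0, pC 1, pC 2, pC 3, pV 0, pV 1, pV 2, pV 3]
    simp only [Matrix.cons_val_zero, Matrix.cons_val_one, Matrix.head_cons,
      Matrix.cons_val_two, Matrix.tail_cons, Matrix.cons_val_three, V11W]
    ring
  · rw [pb, pV 0, pV 1, pV 2, pV 3, pQ0, pQ1, pQ2, pQ3]
    simp only [Matrix.cons_val_zero, Matrix.cons_val_one, Matrix.head_cons,
      Matrix.cons_val_two, Matrix.tail_cons, Matrix.cons_val_three, C1W]
    field_simp
    ring
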